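/- arXiv:2405.11959 — 9 statements merged into one kernel-verified Lean document; each statement's English description precedes it below -/
import Mathlib

section
/- Let (C_n)_{n≥0} be a sequence of polynomials in ℝ[X] with C_{-1} = 0 that satisfies the three-term recurrence x·C_n(x) = C_{n+1}(x) + c_{n+1}·C_n(x) + λ_{n+1}·C_{n-1}(x) for all n ≥ 0, where (c_n)_{n≥1} and (λ_n)_{n≥1} are real sequences. Let (γ_n)_{n≥1} be a sequence of nonzero real numbers, and define Q_m = C_m + γ_m·C_{m-1} for m ≥ 1. If for a given n ≥ 2 one has γ_n(c_{n+1} − c_n + γ_n − γ_{n+1}) + (γ_n/γ_{n−1})·λ_n − λ_{n+1} = 0, then Q_{n+1}(x) = (x − (c_{n+1} + γ_n − γ_{n+1}))·Q_n(x) − (γ_n/γ_{n−1})·λ_n·Q_{n−1}(x). -/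
open Polynomial

/-- If the quasi-Christoffel coefficient condition holds at index `n ≥ 2`,
then the quasi-Christoffel polynomials `Q m = C m + γ m • C (m-1)` satisfy the
three-term recurrence at `n`. -/
theorem quasiChristoffel_ttrr
    (C : ℕ → Polynomial ℝ) (c lam γ : ℕ → ℝ)
    (hrec0 : X * C 0 = C 1 + Polynomial.C (c 1) * C 0)
    (hrec : ∀ n : ℕ, 1 ≤ n →
      X * C n = C (n + 1) + Polynomial.C (c (n + 1)) * C n
        + Polynomial.C (lam (n + 1)) * C (n - 1))
    (hγ : ∀ n : ℕ, 1 ≤ n → γ n ≠ 0)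
    (Q : ℕ → Polynomial ℝ)
    (hQ : ∀ m : ℕ, 1 ≤ m → Q m = C m + Polynomial.C (γ m) * C (m - 1))
    (n : ℕ) (hn : 2 ≤ n)
    (hcond : γ n * (c (n + 1) - c n + γ n - γ (n + 1))
        + (γ n / γ (n - 1)) * lam n - lam (n + 1) = 0) :
    Q (n + 1) = (X - Polynomial.C (c (n + 1) + γ n - γ (n + 1))) * Q n
      - Polynomial.C ((γ n / γ (n - 1)) * lam n) * Q (n - 1) := by
  obtain ⟨k, rfl⟩ : ∃ k, n = k + 2 := ⟨n - 2, by omega⟩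
  have e1 := hrec (k + 2) (by omega)
  have e2 := hrec (k + 1) (by omega)
  simp only [show k + 2 - 1 = k + 1 from rfl, show k + 1 - 1 = k from rfl,
    show k + 2 + 1 = k + 3 from rfl, show k + 1 + 1 = k + 2 from rfl] at *
  rw [hQ (k + 3) (by omega), hQ (k + 2) (by omega), hQ (k + 1) (by omega)]
  simp only [show k + 3 - 1 = k + 2 from rfl, show k + 2 - 1 = k + 1 from rfl,
    show k + 1 - 1 = k from rfl]
  have hγ1 : γ (k + 1) ≠ 0 := hγ (k + 1) (by omega)
  have hA : γ (k + 2) * lam (k + 2) = ((γ (k + 2) / γ (k + 1)) * lam (k + 2)) * γ (k + 1) := by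
    field_simp
  have hB : lam (k + 3) + γ (k + 2) * c (k + 2)
      - (c (k + 3) + γ (k + 2) - γ (k + 3)) * γ (k + 2)
      - (γ (k + 2) / γ (k + 1)) * lam (k + 2) = 0 := by linarith [hcond]
  have hA' := congrArg Polynomial.C hA
  have hB' := congrArg Polynomial.C hB
  simp only [map_mul, map_add, map_sub, map_zero] at hA' hB' ⊢
  linear_combination -e1 - Polynomial.C (γ (k + 2)) * e2 - hA' * C k - hB' * C (k + 1)
end

section
/- Let (c_n)_{n≥1} and (λ_n)_{n≥2} be real sequences and (γ_n)_{n≥1} a sequence of nonzero reals satisfying, for all n ≥ 2, γ_n(c_{n+1} − c_n + γ_n − γ_{n+1}) + (γ_n/γ_{n−1})·λ_n − λ_{n+1} = 0. Define c^q_n = c_n + γ_{n−1} − γ_n for n ≥ 2 and λ^q_n = (γ_{n−1}/γ_{n−2})·λ_{n−1} for n ≥ 3. Let B be the infinite tridiagonal matrix (indexed by integers ≥ 1) with entries B_{n,n} = c_n, B_{n,n+1} = 1, B_{n+1,n} = λ_{n+1}, and all other entries 0, and let M be the infinite lower bidiagonal matrix with M_{n,n} = 1, M_{n+1,n} = γ_n,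 and all other entries 0. Then for all i ≥ 3 and all j ≥ 1, λ^q_i·M_{i−1,j} + c^q_i·M_{i,j} + M_{i+1,j} = γ_{i−1}·B_{i−1,j} + B_{i,j}; that is, the (i,j) entry of J^{qc}·M equals the (i,j) entry of M·B, where J^{qc} is the tridiagonal matrix with diagonal entries c^q_n, superdiagonal entries 1, and subdiagonal entries λ^q_n. -/
/-!
Entrywise, both sides are supported on the four columns `j = i - 2, …, i + 1`. Column `i + 1` gives
`1 = 1`, column `i` is the definition of `c^q_i`, column `i - 2` is the definition of `λ^q_i` (this is
where `γ_{i-2} ≠ 0` enters), and column `i - 1` is exactly the compatibility condition at `n = i - 1`.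
-/

def IsJacobiMatrix {R : Type*} [Zero R] [One R] (a b : ℕ → R) (J : ℕ → ℕ → R) : Prop :=
  ∀ i j : ℕ, 1 ≤ i → 1 ≤ j →
    J i j = if j = i then a i else if j = i + 1 then 1 else if i = j + 1 then b i else 0

def IsLowerBidiagonal {R : Type*} [Zero R] [One R] (γ : ℕ → R) (M : ℕ → ℕ → R) : Prop :=
  ∀ i j : ℕ, 1 ≤ i → 1 ≤ j → M i j = if j = i then 1 else if i = j + 1 then γ j else 0

namespace IsJacobiMatrix

variable {R : Type*} [Zero R] [One R] {a b : ℕ → R} {J : ℕ → ℕ → R} {i j n : ℕ}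

theorem apply_self (hJ : IsJacobiMatrix a b J) (hn : 1 ≤ n) : J n n = a n := by
  simp [hJ n n hn hn]

theorem apply_add_one_right (hJ : IsJacobiMatrix a b J) (hn : 1 ≤ n) : J n (n + 1) = 1 := by
  simp [hJ n (n + 1) hn (by omega)]

theorem apply_add_one_left (hJ : IsJacobiMatrix a b J) (hn : 1 ≤ n) : J (n + 1) n = b (n + 1) := by
  rw [hJ (n + 1) n (by omega) hn]
  split_ifs <;> first | rfl | omega

theorem apply_eq_zero (hJ : IsJacobiMatrix a b J) (hi : 1 ≤ i) (hj : 1 ≤ j)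
    (h : i + 1 < j ∨ j + 1 < i) : J i j = 0 := by
  rw [hJ i j hi hj]
  split_ifs <;> first | rfl | omega

end IsJacobiMatrix

namespace IsLowerBidiagonal

variable {R : Type*} [Zero R] [One R] {γ : ℕ → R} {M : ℕ → ℕ → R} {i j n : ℕ}

theorem apply_self (hM : IsLowerBidiagonal γ M) (hn : 1 ≤ n) : M n n = 1 := by
  simp [hM n n hn hn]

theorem apply_add_one_left (hM : IsLowerBidiagonal γ M) (hn : 1 ≤ n) : M (n + 1) n = γ n := by
  simp [hM (n + 1) n (by omega) hn]

theorem apply_eq_zero (hM : IsLowerBidiagonal γ M) (hi : 1 ≤ i) (hj : 1 ≤ j)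
    (h : i < j ∨ j + 1 < i) : M i j = 0 := by
  rw [hM i j hi hj]
  split_ifs <;> first | rfl | omega

end IsLowerBidiagonal

/-- entrywise identity `(J^{qc} · M)_{i,j} = (M · B)_{i,j}` for the banded
infinite matrices associated with the quasi-Christoffel polynomials. -/
theorem quasiChristoffel_jacobiMatrix_relation
    (c lam γ : ℕ → ℝ) (B M : ℕ → ℕ → ℝ)
    (hγ : ∀ n : ℕ, 1 ≤ n → γ n ≠ 0)
    (hcond : ∀ n : ℕ, 2 ≤ n →
      γ n * (c (n + 1) - c n + γ n - γ (n + 1))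
        + (γ n / γ (n - 1)) * lam n - lam (n + 1) = 0)
    (hB : ∀ i j : ℕ, 1 ≤ i → 1 ≤ j →
      B i j = if j = i then c i else if j = i + 1 then 1 else if i = j + 1 then lam i else 0)
    (hM : ∀ i j : ℕ, 1 ≤ i → 1 ≤ j →
      M i j = if j = i then 1 else if i = j + 1 then γ j else 0)
    (cq lamq : ℕ → ℝ)
    (hcq : ∀ n : ℕ, 2 ≤ n → cq n = c n + γ (n - 1) - γ n)
    (hlamq : ∀ n : ℕ, 3 ≤ n → lamq n = (γ (n - 1) / γ (n - 2)) * lam (n - 1)) :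
    ∀ i j : ℕ, 3 ≤ i → 1 ≤ j →
      lamq i * M (i - 1) j + cq i * M i j + M (i + 1) j
        = γ (i - 1) * B (i - 1) j + B i j := by
  replace hB : IsJacobiMatrix c lam B := hB
  replace hM : IsLowerBidiagonal γ M := hM
  intro i j hi hj
  obtain ⟨n, hn, rfl⟩ : ∃ n, 1 ≤ n ∧ i = n + 2 := ⟨i - 2, by omega, by omega⟩
  have hlamq' : lamq (n + 2) = γ (n + 1) / γ n * lam (n + 1) := hlamq (n + 2) (by omega)
  have hcq' : cq (n + 2) = c (n + 2) + γ (n + 1) - γ (n + 2) := hcq (n + 2) (by omega)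
  have hcond' : γ (n + 1) * (c (n + 2) - c (n + 1) + γ (n + 1) - γ (n + 2))
      + γ (n + 1) / γ n * lam (n + 1) - lam (n + 2) = 0 := hcond (n + 1) (by omega)
  rw [show n + 2 - 1 = n + 1 from rfl]
  obtain hfar | rfl | rfl | rfl | rfl | hfar :
      j < n ∨ n = j ∨ j = n + 1 ∨ j = n + 2 ∨ j = n + 3 ∨ n + 3 < j := by omega
  all_goals simp (disch := omega) only [hM.apply_self, hM.apply_add_one_left, hM.apply_eq_zero,
    hB.apply_self, hB.apply_add_one_left, hB.apply_add_one_right, hB.apply_eq_zero]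
  · ring
  · rw [hlamq']
    field_simp [hγ n hn]
    ring
  · linear_combination hcond' + hlamq' + γ (n + 1) * hcq'
  · linear_combination hcq'
  · ring
  · ring
end

section
/- Let c < d be real numbers and n ≥ 1. Let A be a monic real polynomial of degree n and B a monic real polynomial of degree n−1, such that all (real) roots of A and of B lie in the open interval (c,d) and both A and B split into linear factors over ℝ. Let γ be a nonzero real and set Q = A + γ·B. Assume Q = ∏_{i=1}^n (X − z_i) for real numbers z_1 ≤ z_2 ≤ … ≤ z_n with z_i ∈ (c,d) for all 1 ≤ i ≤ n−1. Then z_n > d if and only if γ < −A(d)/B(d) < 0; in particular −A(d)/B(d) < 0 always holds. -/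
/-!
Evaluate `Q = A + γB` at the right endpoint `d`. Since `A` and `B` are monic with all roots below
`d`, both `A(d)` and `B(d)` are positive. In the factorisation `Q(d) = ∏ (d - zᵢ)` the first `n - 1`
factors are positive, so the sign of `Q(d) = A(d) + γ B(d)` is that of `d - zₙ`. Hence `zₙ > d`
iff `A(d) + γ B(d) < 0`, i.e. iff `γ < -A(d)/B(d)`, a negative number.
-/

open Polynomial

theorem Polynomial.eval_pos_of_monic_of_splits_of_roots_lt {R : Type*} [CommRing R]
    [LinearOrder R] [IsStrictOrderedRing R] {p : R[X]} (hp : p.Monic) (hsplit : p.Splits) {d : R}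
    (hroots : ∀ x ∈ p.roots, x < d) : 0 < p.eval d := by
  rw [hsplit.eval_eq_prod_roots_of_monic hp]
  refine Multiset.prod_pos fun y hy => ?_
  obtain ⟨x, hx, rfl⟩ := Multiset.mem_map.mp hy
  exact sub_pos.mpr (hroots x hx)

theorem Polynomial.lt_iff_eval_prod_Icc_X_sub_C_neg {R : Type*} [CommRing R] [LinearOrder R]
    [IsStrictOrderedRing R] {n : ℕ} (hn : 1 ≤ n) {z : ℕ → R} {d : R}
    (hz : ∀ i, 1 ≤ i → i ≤ n - 1 → z i < d) :
    d < z n ↔ (∏ i ∈ Finset.Icc 1 n, (X - C (z i))).eval d < 0 := by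
  obtain ⟨m, rfl⟩ := Nat.exists_eq_add_of_le' hn
  have hfirst : 0 < ∏ i ∈ Finset.Icc 1 m, (d - z i) :=
    Finset.prod_pos fun i hi => sub_pos.mpr <| by
      obtain ⟨hi1, him⟩ := Finset.mem_Icc.mp hi
      exact hz i hi1 (by omega)
  simp only [eval_prod, eval_sub, eval_X, eval_C]
  rw [Finset.prod_Icc_succ_top (by omega), ← sub_neg (a := d)]
  exact ⟨mul_neg_of_pos_of_neg hfirst, fun h => neg_of_mul_neg_right h hfirst.le⟩

theorem quasiChristoffel_zero_right_of_interval_general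
    (c d : ℝ) (n : ℕ) (hn : 1 ≤ n)
    (A B : Polynomial ℝ)
    (hAmonic : A.Monic)
    (hBmonic : B.Monic)
    (hAsplit : (A.map (RingHom.id ℝ)).Splits) (hBsplit : (B.map (RingHom.id ℝ)).Splits)
    (hAroots : ∀ x ∈ A.roots, c < x ∧ x < d)
    (hBroots : ∀ x ∈ B.roots, c < x ∧ x < d)
    (γ : ℝ)
    (z : ℕ → ℝ)
    (hQ : A + Polynomial.C γ * B = ∏ i ∈ Finset.Icc 1 n, (X - Polynomial.C (z i)))
    (hzin : ∀ i : ℕ, 1 ≤ i → i ≤ n - 1 → c < z i ∧ z i < d) :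
    (d < z n ↔ γ < -A.eval d / B.eval d) ∧ -A.eval d / B.eval d < 0 := by
  rw [map_id] at hAsplit hBsplit
  have hAd : 0 < A.eval d :=
    eval_pos_of_monic_of_splits_of_roots_lt hAmonic hAsplit fun x hx => (hAroots x hx).2
  have hBd : 0 < B.eval d :=
    eval_pos_of_monic_of_splits_of_roots_lt hBmonic hBsplit fun x hx => (hBroots x hx).2
  have hQd : d < z n ↔ A.eval d + γ * B.eval d < 0 := by
    simpa only [← hQ, eval_add, eval_mul, eval_C] using
      lt_iff_eval_prod_Icc_X_sub_C_neg hn fun i hi hin => (hzin i hi hin).2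
  refine ⟨hQd.trans ?_, div_neg_of_neg_of_pos (neg_neg_of_pos hAd) hBd⟩
  rw [lt_div_iff₀ hBd]
  constructor <;> intro h <;> linarith

/-- the largest zero of the quasi-Christoffel polynomial `Q = A + γB`
lies to the right of the interval of orthogonality `(c,d)` iff `γ < -A(d)/B(d) < 0`. -/
theorem quasiChristoffel_zero_right_of_interval
    (c d : ℝ) (hcd : c < d) (n : ℕ) (hn : 1 ≤ n)
    (A B : Polynomial ℝ)
    (hAmonic : A.Monic) (hAdeg : A.natDegree = n)
    (hBmonic : B.Monic) (hBdeg : B.natDegree = n - 1)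
    (hAsplit : (A.map (RingHom.id ℝ)).Splits) (hBsplit : (B.map (RingHom.id ℝ)).Splits)
    (hAroots : ∀ x ∈ A.roots, c < x ∧ x < d)
    (hBroots : ∀ x ∈ B.roots, c < x ∧ x < d)
    (γ : ℝ) (hγ : γ ≠ 0)
    (z : ℕ → ℝ)
    (hQ : A + Polynomial.C γ * B = ∏ i ∈ Finset.Icc 1 n, (X - Polynomial.C (z i)))
    (hmono : ∀ i j : ℕ, 1 ≤ i → i ≤ j → j ≤ n → z i ≤ z j)
    (hzin : ∀ i : ℕ, 1 ≤ i → i ≤ n - 1 → c < z i ∧ z i < d) :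
    (d < z n ↔ γ < -A.eval d / B.eval d) ∧ -A.eval d / B.eval d < 0 :=
  quasiChristoffel_zero_right_of_interval_general c d n hn A B hAmonic hBmonic hAsplit hBsplit
    hAroots hBroots γ z hQ hzin
end

section
/- Let c < d be real numbers and n ≥ 1. Let A be a monic real polynomial of degree n and B a monic real polynomial of degree n−1, such that all (real) roots of A and of B lie in the open interval (c,d) and both A and B split into linear factors over ℝ. Let γ be a nonzero real and set Q = A + γ·B. Assume Q = ∏_{i=1}^n (X − z_i) for real numbers z_1 ≤ z_2 ≤ … ≤ z_n with z_i ∈ (c,d) for all 2 ≤ i ≤ n. Then z_1 < c if and only if γ > −A(c)/B(c) > 0; in particular −A(c)/B(c) > 0 always holds. -/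
/-!
Evaluate everything at `c`. A monic polynomial that splits with all roots to the right of `c`
has the sign `(-1) ^ deg` at `c`, so with `ε = (-1) ^ (n - 1)` we get `ε A(c) < 0 < ε B(c)`.
On the other side, `Q(c) = (c - z₁) ∏_{i ≥ 2} (c - zᵢ)` and `ε ∏_{i ≥ 2} (c - zᵢ) > 0`, so
`ε A(c) + γ ε B(c)` has the sign of `c - z₁`; solving for `γ` gives the claim.
-/

open Polynomial

section SignLeftOfRoots

variable {K : Type*} [Field K] [LinearOrder K] [IsStrictOrderedRing K]

theorem Multiset.neg_one_pow_card_mul_prod_map_sub_pos {s : Multiset K} {c : K}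
    (hs : ∀ x ∈ s, c < x) : 0 < (-1) ^ Multiset.card s * (s.map (c - ·)).prod := by
  induction s using Multiset.induction_on with
  | empty => simp
  | cons a s ih =>
    have ha : 0 < a - c := sub_pos.mpr (hs a (Multiset.mem_cons_self a s))
    have hrest := ih fun x hx => hs x (Multiset.mem_cons_of_mem hx)
    have hcons : (-1) ^ Multiset.card (a ::ₘ s) * ((a ::ₘ s).map (c - ·)).prod
        = (a - c) * ((-1) ^ Multiset.card s * (s.map (c - ·)).prod) := by
      rw [Multiset.card_cons, Multiset.map_cons, Multiset.prod_cons, pow_succ]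
      ring
    rw [hcons]
    exact mul_pos ha hrest

theorem Finset.neg_one_pow_card_mul_prod_sub_pos {ι : Type*} {s : Finset ι} {z : ι → K} {c : K}
    (hs : ∀ i ∈ s, c < z i) : 0 < (-1) ^ s.card * ∏ i ∈ s, (c - z i) := by
  have h := Multiset.neg_one_pow_card_mul_prod_map_sub_pos (s := s.val.map z) (c := c)
    (by simpa using hs)
  rwa [Multiset.card_map, Multiset.map_map, Finset.card_val, Finset.prod_map_val] at h

theorem Polynomial.Splits.neg_one_pow_natDegree_mul_eval_pos {p : K[X]} (hp : p.Splits)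
    (hm : p.Monic) {c : K} (hc : ∀ x ∈ p.roots, c < x) :
    0 < (-1) ^ p.natDegree * p.eval c := by
  rw [hp.eval_eq_prod_roots_of_monic hm, hp.natDegree_eq_card_roots]
  exact Multiset.neg_one_pow_card_mul_prod_map_sub_pos hc

end SignLeftOfRoots

theorem quasiChristoffel_zero_left_of_interval_general
    (c d : ℝ) (n : ℕ) (hn : 1 ≤ n)
    (A B : Polynomial ℝ)
    (hAmonic : A.Monic) (hAdeg : A.natDegree = n)
    (hBmonic : B.Monic) (hBdeg : B.natDegree = n - 1)
    (hAsplit : (A.map (RingHom.id ℝ)).Splits) (hBsplit : (B.map (RingHom.id ℝ)).Splits)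
    (hAroots : ∀ x ∈ A.roots, c < x ∧ x < d)
    (hBroots : ∀ x ∈ B.roots, c < x ∧ x < d)
    (γ : ℝ)
    (z : ℕ → ℝ)
    (hQ : A + Polynomial.C γ * B = ∏ i ∈ Finset.Icc 1 n, (X - Polynomial.C (z i)))
    (hzin : ∀ i : ℕ, 2 ≤ i → i ≤ n → c < z i ∧ z i < d) :
    (z 1 < c ↔ -A.eval c / B.eval c < γ) ∧ 0 < -A.eval c / B.eval c := by
  rw [map_id] at hAsplit hBsplit
  set ε : ℝ := (-1) ^ (n - 1)
  have hεA : ε * A.eval c < 0 := by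
    have h := hAsplit.neg_one_pow_natDegree_mul_eval_pos hAmonic fun x hx => (hAroots x hx).1
    rw [hAdeg, ← Nat.sub_add_cancel hn, pow_succ] at h
    linarith
  have hεB : 0 < ε * B.eval c := by
    simpa [hBdeg] using
      hBsplit.neg_one_pow_natDegree_mul_eval_pos hBmonic fun x hx => (hBroots x hx).1
  have hεP : 0 < ε * ∏ i ∈ Finset.Icc 2 n, (c - z i) := by
    have h := Finset.neg_one_pow_card_mul_prod_sub_pos (s := Finset.Icc 2 n) (z := z) (c := c)
      fun i hi => (hzin i (Finset.mem_Icc.mp hi).1 (Finset.mem_Icc.mp hi).2).1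
    rwa [Nat.card_Icc, show n + 1 - 2 = n - 1 by omega] at h
  have hQc : ε * A.eval c + γ * (ε * B.eval c)
      = (c - z 1) * (ε * ∏ i ∈ Finset.Icc 2 n, (c - z i)) := by
    have h := congrArg (eval c) hQ
    rw [← Finset.insert_Icc_add_one_left_eq_Icc hn, Finset.prod_insert (by simp)] at h
    simp only [eval_add, eval_mul, eval_C, eval_prod, eval_sub, eval_X] at h
    linear_combination ε * h
  have hratio : -A.eval c / B.eval c = -(ε * A.eval c) / (ε * B.eval c) := by
    rw [neg_div, neg_div, mul_div_mul_left _ _ (pow_ne_zero _ (by norm_num))]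
  rw [hratio, div_lt_iff₀ hεB]
  refine ⟨⟨fun h => by nlinarith, fun h => by nlinarith⟩, div_pos (by linarith) hεB⟩

/-- the smallest zero of the quasi-Christoffel polynomial `Q = A + γB`
lies to the left of the interval of orthogonality `(c,d)` iff `γ > -A(c)/B(c) > 0`. -/
theorem quasiChristoffel_zero_left_of_interval
    (c d : ℝ) (hcd : c < d) (n : ℕ) (hn : 1 ≤ n)
    (A B : Polynomial ℝ)
    (hAmonic : A.Monic) (hAdeg : A.natDegree = n)
    (hBmonic : B.Monic) (hBdeg : B.natDegree = n - 1)
    (hAsplit : (A.map (RingHom.id ℝ)).Splits) (hBsplit : (B.map (RingHom.id ℝ)).Splits)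
    (hAroots : ∀ x ∈ A.roots, c < x ∧ x < d)
    (hBroots : ∀ x ∈ B.roots, c < x ∧ x < d)
    (γ : ℝ) (hγ : γ ≠ 0)
    (z : ℕ → ℝ)
    (hQ : A + Polynomial.C γ * B = ∏ i ∈ Finset.Icc 1 n, (X - Polynomial.C (z i)))
    (hmono : ∀ i j : ℕ, 1 ≤ i → i ≤ j → j ≤ n → z i ≤ z j)
    (hzin : ∀ i : ℕ, 2 ≤ i → i ≤ n → c < z i ∧ z i < d) :
    (z 1 < c ↔ -A.eval c / B.eval c < γ) ∧ 0 < -A.eval c / B.eval c :=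
  quasiChristoffel_zero_left_of_interval_general c d n hn A B hAmonic hAdeg hBmonic hBdeg hAsplit
    hBsplit hAroots hBroots γ z hQ hzin
end

section
/- Let α, β be reals with α > −1 and β > −1, and define γ_n = −2(α+n)(n+α+β+1)/((2n+α+β+1)(2n+α+β)) for n ≥ 1. Then for every n ≥ 2: −((β+1)² − α²)/((α+β+2n−1)(α+β+2n+1)) + ((β+1)² − α²)/((α+β+2n+1)(α+β+2n+3)) + γ_n − γ_{n+1} − (1/γ_n)·4n(α+n)(β+n+1)(α+β+n+1)/((α+β+2n)(α+β+2n+1)²(α+β+2n+2)) + (1/γ_{n−1})·4(n−1)(α+n−1)(β+n)(α+β+n)/((α+β+2n−2)(α+β+2n−1)²(α+β+2n)) = 0. -/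
set_option maxHeartbeats 2000000

/-- `γ_n = -2(α+n)(n+α+β+1)/((2n+α+β+1)(2n+α+β))` solves the nonlinear
difference equation for the quasi-Christoffel Jacobi coefficients. -/
theorem quasiChristoffel_jacobi_gamma_solves
    (α β : ℝ) (hα : -1 < α) (hβ : -1 < β)
    (γ : ℕ → ℝ)
    (hγ : ∀ n : ℕ, 1 ≤ n →
      γ n = -(2 * (α + (n : ℝ)) * ((n : ℝ) + α + β + 1))
        / ((2 * (n : ℝ) + α + β + 1) * (2 * (n : ℝ) + α + β))) :
    ∀ n : ℕ, 2 ≤ n →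
      -(((β + 1) ^ 2 - α ^ 2) / ((α + β + 2 * (n : ℝ) - 1) * (α + β + 2 * (n : ℝ) + 1)))
      + ((β + 1) ^ 2 - α ^ 2) / ((α + β + 2 * (n : ℝ) + 1) * (α + β + 2 * (n : ℝ) + 3))
      + γ n - γ (n + 1)
      - (1 / γ n) * (4 * (n : ℝ) * (α + (n : ℝ)) * (β + (n : ℝ) + 1) * (α + β + (n : ℝ) + 1)
          / ((α + β + 2 * (n : ℝ)) * (α + β + 2 * (n : ℝ) + 1) ^ 2 * (α + β + 2 * (n : ℝ) + 2)))
      + (1 / γ (n - 1)) * (4 * ((n : ℝ) - 1) * (α + (n : ℝ) - 1) * (β + (n : ℝ)) * (α + β + (n : ℝ))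
          / ((α + β + 2 * (n : ℝ) - 2) * (α + β + 2 * (n : ℝ) - 1) ^ 2 * (α + β + 2 * (n : ℝ))))
      = 0 := by
  intro n hn
  have hx : (2 : ℝ) ≤ (n : ℝ) := by exact_mod_cast hn
  have h1 := hγ n (by omega)
  have h2 := hγ (n + 1) (by omega)
  have h3 := hγ (n - 1) (by omega)
  have hcast : ((n - 1 : ℕ) : ℝ) = (n : ℝ) - 1 := by
    have : 1 ≤ n := by omega
    push_cast [this]; ring
  rw [hcast] at h3
  push_cast at h2
  set x := (n : ℝ) with hxdef
  have d1 : α + β + 2 * x - 2 > 0 := by linarith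
  have d2 : α + β + 2 * x - 1 > 0 := by linarith
  have d3 : α + β + 2 * x > 0 := by linarith
  have d4 : α + β + 2 * x + 1 > 0 := by linarith
  have d5 : α + β + 2 * x + 2 > 0 := by linarith
  have d6 : α + β + 2 * x + 3 > 0 := by linarith
  have e1 : α + x > 0 := by linarith
  have e2 : x + α + β + 1 > 0 := by linarith
  have e3 : α + (x - 1) > 0 := by linarith
  have e4 : x - 1 + α + β + 1 > 0 := by linarith
  have e5 : α + (x + 1) > 0 := by linarith
  have e6 : x + 1 + α + β + 1 > 0 := by linarith
  have A : (1 / γ n) * (4 * x * (α + x) * (β + x + 1) * (α + β + x + 1)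
      / ((α + β + 2 * x) * (α + β + 2 * x + 1) ^ 2 * (α + β + 2 * x + 2)))
      = -(2 * x * (β + x + 1)) / ((α + β + 2 * x + 1) * (α + β + 2 * x + 2)) := by
    have hg1 : 2 * x + α + β + 1 ≠ 0 := by intro h; nlinarith
    have hg2 : 2 * x + α + β ≠ 0 := by intro h; nlinarith
    rw [h1]
    field_simp
    ring
  have B : (1 / γ (n - 1)) * (4 * (x - 1) * (α + x - 1) * (β + x) * (α + β + x)
      / ((α + β + 2 * x - 2) * (α + β + 2 * x - 1) ^ 2 * (α + β + 2 * x)))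
      = -(2 * (x - 1) * (β + x)) / ((α + β + 2 * x - 1) * (α + β + 2 * x)) := by
    have hg1 : 2 * (x - 1) + α + β + 1 ≠ 0 := by intro h; nlinarith
    have hg2 : 2 * (x - 1) + α + β ≠ 0 := by intro h; nlinarith
    rw [h3]
    field_simp
    ring
  rw [A, B, h1, h2]
  have hg1 : 2 * x + α + β + 1 ≠ 0 := by intro h; nlinarith
  have hg2 : 2 * x + α + β ≠ 0 := by intro h; nlinarith
  have hg3 : 2 * (x + 1) + α + β + 1 ≠ 0 := by intro h; nlinarith
  have hg4 : 2 * (x + 1) + α + β ≠ 0 := by intro h; nlinarith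
  field_simp
  ring
end

section
/- Let α, β be reals with α > −1, β > −1, and α + β ∉ {−1, 0}. Then for every n ≥ 1, in ℝ[X]: (x − 1)·P_{n−1}^{(α+1,β+1)}(x) = P_n^{(α,β+1)}(x) − [2(α+n)(n+α+β+1)/((2n+α+β+1)(2n+α+β))]·P_{n−1}^{(α,β+1)}(x). -/
open Polynomial

/-- `jacobiC a b n` is the recurrence coefficient `c_{n+1}^{(a,b)}` of the monic
Jacobi polynomials. -/
noncomputable def jacobiC (a b : ℝ) (n : ℕ) : ℝ :=
  (b ^ 2 - a ^ 2) / ((2 * (n : ℝ) + a + b) * (2 * (n : ℝ) + a + b + 2))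

/-- `jacobiL a b n` is the recurrence coefficient `λ_{n+1}^{(a,b)}` of the monic
Jacobi polynomials. -/
noncomputable def jacobiL (a b : ℝ) (n : ℕ) : ℝ :=
  4 * (n : ℝ) * ((n : ℝ) + a) * ((n : ℝ) + b) * ((n : ℝ) + a + b) /
    ((2 * (n : ℝ) + a + b) ^ 2 * (2 * (n : ℝ) + a + b + 1) * (2 * (n : ℝ) + a + b - 1))

/-- The monic Jacobi polynomials `P_n^{(a,b)}`, defined by the three-term recurrence
`P_{n+1} = (X - c_{n+1}) P_n - λ_{n+1} P_{n-1}` with `P_{-1} = 0`, `P_0 = 1`. -/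
noncomputable def jacobiP (a b : ℝ) : ℕ → Polynomial ℝ
  | 0 => 1
  | 1 => X - Polynomial.C (jacobiC a b 0)
  | n + 2 => (X - Polynomial.C (jacobiC a b (n + 1))) * jacobiP a b (n + 1)
      - Polynomial.C (jacobiL a b (n + 1)) * jacobiP a b n

/-- The Christoffel transform coefficient `γ_n`. -/
noncomputable def gam (α β : ℝ) (n : ℕ) : ℝ :=
  2 * (α + (n : ℝ)) * ((n : ℝ) + α + β + 1) /
    ((2 * (n : ℝ) + α + β + 1) * (2 * (n : ℝ) + α + β))

lemma jacobiC_eq (a b : ℝ) (n : ℕ) (nu p q : ℝ) (hnu : b^2 - a^2 = nu)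
    (hp : 2*(n:ℝ)+a+b = p) (hq : p + 2 = q) :
    jacobiC a b n = nu / (p * q) := by
  simp only [jacobiC]; rw [hnu, hp, ← hq]

lemma jacobiL_eq (a b : ℝ) (n : ℕ) (nu p q r : ℝ)
    (hnu : 4 * (n:ℝ) * ((n:ℝ)+a) * ((n:ℝ)+b) * ((n:ℝ)+a+b) = nu)
    (hp : 2*(n:ℝ)+a+b = p) (hq : p + 1 = q) (hr : p - 1 = r) :
    jacobiL a b n = nu / (p^2 * q * r) := by
  simp only [jacobiL]; rw [hnu, hp, ← hq, ← hr]

lemma gam_eq (α β : ℝ) (n : ℕ) (nu p q : ℝ)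
    (hnu : 2 * (α + (n:ℝ)) * ((n:ℝ) + α + β + 1) = nu)
    (hp : 2*(n:ℝ)+α+β+1 = p) (hq : 2*(n:ℝ)+α+β = q) :
    gam α β n = nu / (p * q) := by
  simp only [gam]; rw [hnu, hp, hq]

lemma aux_I (α β : ℝ) (h : -2 < α + β) (n : ℕ) :
    jacobiC (α+1) (β+1) (n+1) + gam α β (n+2) = jacobiC α (β+1) (n+2) + gam α β (n+3) := by
  have hn : (0:ℝ) ≤ n := n.cast_nonneg
  have d4 : 2*(n:ℝ)+α+β+4 ≠ 0 := by nlinarith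
  have d5 : 2*(n:ℝ)+α+β+5 ≠ 0 := by nlinarith
  have d6 : 2*(n:ℝ)+α+β+6 ≠ 0 := by nlinarith
  have d7 : 2*(n:ℝ)+α+β+7 ≠ 0 := by nlinarith
  rw [jacobiC_eq (α+1) (β+1) (n+1) ((β+1)^2-(α+1)^2) (2*(n:ℝ)+α+β+4) (2*(n:ℝ)+α+β+6)
        (by ring) (by push_cast; ring) (by ring),
      jacobiC_eq α (β+1) (n+2) ((β+1)^2-α^2) (2*(n:ℝ)+α+β+5) (2*(n:ℝ)+α+β+7)
        (by ring) (by push_cast; ring) (by ring),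
      gam_eq α β (n+2) (2*(α+((n:ℝ)+2))*(((n:ℝ)+2)+α+β+1)) (2*(n:ℝ)+α+β+5) (2*(n:ℝ)+α+β+4)
        (by push_cast; ring) (by push_cast; ring) (by push_cast; ring),
      gam_eq α β (n+3) (2*(α+((n:ℝ)+3))*(((n:ℝ)+3)+α+β+1)) (2*(n:ℝ)+α+β+7) (2*(n:ℝ)+α+β+6)
        (by push_cast; ring) (by push_cast; ring) (by push_cast; ring)]
  field_simp
  ring

lemma aux_II (α β : ℝ) (h : -2 < α + β) (n : ℕ) :
    gam α β (n+2) * (jacobiC (α+1) (β+1) (n+1) - jacobiC α (β+1) (n+1))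
      - jacobiL (α+1) (β+1) (n+1) = - jacobiL α (β+1) (n+2) := by
  have hn : (0:ℝ) ≤ n := n.cast_nonneg
  have d3 : 2*(n:ℝ)+α+β+3 ≠ 0 := by nlinarith
  have d4 : 2*(n:ℝ)+α+β+4 ≠ 0 := by nlinarith
  have d5 : 2*(n:ℝ)+α+β+5 ≠ 0 := by nlinarith
  have d6 : 2*(n:ℝ)+α+β+6 ≠ 0 := by nlinarith
  rw [jacobiC_eq (α+1) (β+1) (n+1) ((β+1)^2-(α+1)^2) (2*(n:ℝ)+α+β+4) (2*(n:ℝ)+α+β+6)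
        (by ring) (by push_cast; ring) (by ring),
      jacobiC_eq α (β+1) (n+1) ((β+1)^2-α^2) (2*(n:ℝ)+α+β+3) (2*(n:ℝ)+α+β+5)
        (by ring) (by push_cast; ring) (by ring),
      jacobiL_eq (α+1) (β+1) (n+1)
        (4*((n:ℝ)+1)*((n:ℝ)+α+2)*((n:ℝ)+β+2)*((n:ℝ)+α+β+3))
        (2*(n:ℝ)+α+β+4) (2*(n:ℝ)+α+β+5) (2*(n:ℝ)+α+β+3)
        (by push_cast; ring) (by push_cast; ring) (by ring) (by ring),
      jacobiL_eq α (β+1) (n+2)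
        (4*((n:ℝ)+2)*((n:ℝ)+α+2)*((n:ℝ)+β+3)*((n:ℝ)+α+β+3))
        (2*(n:ℝ)+α+β+5) (2*(n:ℝ)+α+β+6) (2*(n:ℝ)+α+β+4)
        (by push_cast; ring) (by push_cast; ring) (by ring) (by ring),
      gam_eq α β (n+2) (2*(α+((n:ℝ)+2))*(((n:ℝ)+2)+α+β+1)) (2*(n:ℝ)+α+β+5) (2*(n:ℝ)+α+β+4)
        (by push_cast; ring) (by push_cast; ring) (by push_cast; ring)]
  field_simp
  ring

lemma aux_III (α β : ℝ) (h : -2 < α + β) (n : ℕ) :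
    gam α β (n+2) * jacobiL α (β+1) (n+1) = jacobiL (α+1) (β+1) (n+1) * gam α β (n+1) := by
  have hn : (0:ℝ) ≤ n := n.cast_nonneg
  have d2 : 2*(n:ℝ)+α+β+2 ≠ 0 := by nlinarith
  have d3 : 2*(n:ℝ)+α+β+3 ≠ 0 := by nlinarith
  have d4 : 2*(n:ℝ)+α+β+4 ≠ 0 := by nlinarith
  have d5 : 2*(n:ℝ)+α+β+5 ≠ 0 := by nlinarith
  rw [jacobiL_eq α (β+1) (n+1)
        (4*((n:ℝ)+1)*((n:ℝ)+α+1)*((n:ℝ)+β+2)*((n:ℝ)+α+β+2))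
        (2*(n:ℝ)+α+β+3) (2*(n:ℝ)+α+β+4) (2*(n:ℝ)+α+β+2)
        (by push_cast; ring) (by push_cast; ring) (by ring) (by ring),
      jacobiL_eq (α+1) (β+1) (n+1)
        (4*((n:ℝ)+1)*((n:ℝ)+α+2)*((n:ℝ)+β+2)*((n:ℝ)+α+β+3))
        (2*(n:ℝ)+α+β+4) (2*(n:ℝ)+α+β+5) (2*(n:ℝ)+α+β+3)
        (by push_cast; ring) (by push_cast; ring) (by ring) (by ring),
      gam_eq α β (n+2) (2*(α+((n:ℝ)+2))*(((n:ℝ)+2)+α+β+1)) (2*(n:ℝ)+α+β+5) (2*(n:ℝ)+α+β+4)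
        (by push_cast; ring) (by push_cast; ring) (by push_cast; ring),
      gam_eq α β (n+1) (2*(α+((n:ℝ)+1))*(((n:ℝ)+1)+α+β+1)) (2*(n:ℝ)+α+β+3) (2*(n:ℝ)+α+β+2)
        (by push_cast; ring) (by push_cast; ring) (by push_cast; ring)]
  field_simp
  ring

lemma aux_base0 (α β : ℝ) (h : -2 < α + β) (h1 : α + β ≠ -1) :
    jacobiC α (β+1) 0 + gam α β 1 = 1 := by
  have d1 : α+β+1 ≠ 0 := fun hc => h1 (by linarith)
  have d2 : α+β+2 ≠ 0 := by intro hc; nlinarith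
  have d3 : α+β+3 ≠ 0 := by intro hc; nlinarith
  rw [jacobiC_eq α (β+1) 0 ((β+1)^2-α^2) (α+β+1) (α+β+3)
        (by ring) (by push_cast; ring) (by ring),
      gam_eq α β 1 (2*(α+1)*(α+β+2)) (α+β+3) (α+β+2)
        (by push_cast; ring) (by push_cast; ring) (by push_cast; ring)]
  field_simp
  ring

lemma aux_base1a (α β : ℝ) (h : -2 < α + β) (h1 : α + β ≠ -1) :
    1 + jacobiC (α+1) (β+1) 0 = jacobiC α (β+1) 1 + jacobiC α (β+1) 0 + gam α β 2 := by
  have d1 : α+β+1 ≠ 0 := fun hc => h1 (by linarith)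
  have d2 : α+β+2 ≠ 0 := by intro hc; nlinarith
  have d3 : α+β+3 ≠ 0 := by intro hc; nlinarith
  have d4 : α+β+4 ≠ 0 := by intro hc; nlinarith
  have d5 : α+β+5 ≠ 0 := by intro hc; nlinarith
  rw [jacobiC_eq (α+1) (β+1) 0 ((β+1)^2-(α+1)^2) (α+β+2) (α+β+4)
        (by ring) (by push_cast; ring) (by ring),
      jacobiC_eq α (β+1) 1 ((β+1)^2-α^2) (α+β+3) (α+β+5)
        (by ring) (by push_cast; ring) (by ring),
      jacobiC_eq α (β+1) 0 ((β+1)^2-α^2) (α+β+1) (α+β+3)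
        (by ring) (by push_cast; ring) (by ring),
      gam_eq α β 2 (2*(α+2)*(α+β+3)) (α+β+5) (α+β+4)
        (by push_cast; ring) (by push_cast; ring) (by push_cast; ring)]
  field_simp
  ring

lemma aux_base1b (α β : ℝ) (h : -2 < α + β) (h1 : α + β ≠ -1) :
    jacobiC (α+1) (β+1) 0 = jacobiC α (β+1) 1 * jacobiC α (β+1) 0 - jacobiL α (β+1) 1
      + gam α β 2 * jacobiC α (β+1) 0 := by
  have d1 : α+β+1 ≠ 0 := fun hc => h1 (by linarith)
  have d2 : α+β+2 ≠ 0 := by intro hc; nlinarith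
  have d3 : α+β+3 ≠ 0 := by intro hc; nlinarith
  have d4 : α+β+4 ≠ 0 := by intro hc; nlinarith
  have d5 : α+β+5 ≠ 0 := by intro hc; nlinarith
  rw [jacobiC_eq (α+1) (β+1) 0 ((β+1)^2-(α+1)^2) (α+β+2) (α+β+4)
        (by ring) (by push_cast; ring) (by ring),
      jacobiC_eq α (β+1) 1 ((β+1)^2-α^2) (α+β+3) (α+β+5)
        (by ring) (by push_cast; ring) (by ring),
      jacobiC_eq α (β+1) 0 ((β+1)^2-α^2) (α+β+1) (α+β+3)
        (by ring) (by push_cast; ring) (by ring),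
      jacobiL_eq α (β+1) 1 (4*(1+α)*(1+β+1)*(α+β+2)) (α+β+3) (α+β+4) (α+β+2)
        (by push_cast; ring) (by push_cast; ring) (by ring) (by ring),
      gam_eq α β 2 (2*(α+2)*(α+β+3)) (α+β+5) (α+β+4)
        (by push_cast; ring) (by push_cast; ring) (by push_cast; ring)]
  field_simp
  ring

/-- compact form of the quasi-Christoffel Jacobi polynomial (Solution 1):
`(x-1) P_{n-1}^{(α+1,β+1)} = P_n^{(α,β+1)} - γ_n P_{n-1}^{(α,β+1)}`. -/
theorem quasiChristoffel_jacobi_compact_sol1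
    (α β : ℝ) (hα : -1 < α) (hβ : -1 < β)
    (hab1 : α + β ≠ -1) (hab0 : α + β ≠ 0) :
    ∀ n : ℕ, 1 ≤ n →
      (X - 1) * jacobiP (α + 1) (β + 1) (n - 1) =
        jacobiP α (β + 1) n
        - Polynomial.C (2 * (α + (n : ℝ)) * ((n : ℝ) + α + β + 1) /
            ((2 * (n : ℝ) + α + β + 1) * (2 * (n : ℝ) + α + β)))
          * jacobiP α (β + 1) (n - 1) := by
  have hs : -2 < α + β := by linarith
  have key : ∀ m : ℕ, (X - 1) * jacobiP (α+1) (β+1) m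
      = jacobiP α (β+1) (m+1) - C (gam α β (m+1)) * jacobiP α (β+1) m := by
    intro m
    induction m using Nat.twoStepInduction with
    | zero =>
      simp only [jacobiP]
      have hb : C (jacobiC α (β+1) 0) + C (gam α β 1) = 1 := by
        rw [← C_add, aux_base0 α β hs hab1, C_1]
      linear_combination hb
    | one =>
      simp only [jacobiP]
      have hs1 : (1 : ℝ[X]) + C (jacobiC (α+1) (β+1) 0)
          = C (jacobiC α (β+1) 1) + C (jacobiC α (β+1) 0) + C (gam α β 2) := by
        rw [← C_1, ← C_add, ← C_add, ← C_add]
        exact congrArg C (aux_base1a α β hs hab1)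
      have hs2 : C (jacobiC (α+1) (β+1) 0)
          = C (jacobiC α (β+1) 1) * C (jacobiC α (β+1) 0) - C (jacobiL α (β+1) 1)
            + C (gam α β 2) * C (jacobiC α (β+1) 0) := by
        rw [← C_mul, ← C_mul, ← C_sub, ← C_add]
        exact congrArg C (aux_base1b α β hs hab1)
      linear_combination (-X) * hs1 + hs2
    | more n ih0 ih1 =>
      have hQ : jacobiP (α+1) (β+1) (n+2)
          = (X - C (jacobiC (α+1) (β+1) (n+1))) * jacobiP (α+1) (β+1) (n+1)
            - C (jacobiL (α+1) (β+1) (n+1)) * jacobiP (α+1) (β+1) n := rfl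
      have hR3 : jacobiP α (β+1) (n+3)
          = (X - C (jacobiC α (β+1) (n+2))) * jacobiP α (β+1) (n+2)
            - C (jacobiL α (β+1) (n+2)) * jacobiP α (β+1) (n+1) := rfl
      have hrec : jacobiP α (β+1) (n+2)
          = (X - C (jacobiC α (β+1) (n+1))) * jacobiP α (β+1) (n+1)
            - C (jacobiL α (β+1) (n+1)) * jacobiP α (β+1) n := rfl
      have hI : C (jacobiC (α+1) (β+1) (n+1)) + C (gam α β (n+2))
          = C (jacobiC α (β+1) (n+2)) + C (gam α β (n+3)) := by
        rw [← C_add, ← C_add]; exact congrArg C (aux_I α β hs n)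
      have hII : C (gam α β (n+2)) * (C (jacobiC (α+1) (β+1) (n+1)) - C (jacobiC α (β+1) (n+1)))
          - C (jacobiL (α+1) (β+1) (n+1)) = - C (jacobiL α (β+1) (n+2)) := by
        rw [← C_sub, ← C_mul, ← C_sub, ← C_neg]; exact congrArg C (aux_II α β hs n)
      have hIII : C (gam α β (n+2)) * C (jacobiL α (β+1) (n+1))
          = C (jacobiL (α+1) (β+1) (n+1)) * C (gam α β (n+1)) := by
        rw [← C_mul, ← C_mul]; exact congrArg C (aux_III α β hs n)
      rw [hQ, show n+2+1 = n+3 from rfl, hR3]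
      linear_combination (X - C (jacobiC (α+1) (β+1) (n+1))) * ih1
        - C (jacobiL (α+1) (β+1) (n+1)) * ih0
        + C (gam α β (n+2)) * hrec
        - jacobiP α (β+1) (n+2) * hI
        + jacobiP α (β+1) (n+1) * hII
        - jacobiP α (β+1) n * hIII
  intro n hn
  obtain ⟨m, rfl⟩ : ∃ m, n = m + 1 := ⟨n - 1, by omega⟩
  simp only [Nat.add_sub_cancel]
  rw [key m]
  have hg : gam α β (m+1) = 2 * (α + ((m+1 : ℕ) : ℝ)) * (((m+1 : ℕ) : ℝ) + α + β + 1) /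
      ((2 * ((m+1 : ℕ) : ℝ) + α + β + 1) * (2 * ((m+1 : ℕ) : ℝ) + α + β)) := by
    simp only [gam]
  rw [hg]
end

section
/- Let α, β be reals with α > −1, β > −1, and α + β ∉ {−1, 0}. For n ≥ 1 define the quasi-Christoffel Jacobi polynomial J^{QC}_n(x) = P_n^{(α,β+1)}(x) − [2(α+n)(n+α+β+1)/((2n+α+β+1)(2n+α+β))]·P_{n−1}^{(α,β+1)}(x). Then for every n ≥ 2, in ℝ[X]: J^{QC}_{n+1}(x) = (x − c^{qc}_{n+1})·J^{QC}_n(x) − λ^{qc}_{n+1}·J^{QC}_{n−1}(x), where λ^{qc}_{n+1} = 4(n−1)(n+α)(n+β)(n+α+β+1)/((2n+α+β)²(2n+α+β+1)(2n+α+β−1)) and c^{qc}_{n+1} = (β−α)(2+β+α)/((2n+α+β)(2n+α+β+2)). -/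
open Polynomial

/-- The quasi-Christoffel Jacobi polynomial of order one (Solution 1),
`J^{QC}_n(x;-1) = P_n^{(α,β+1)} - γ_n P_{n-1}^{(α,β+1)}`. -/
noncomputable def JQC (α β : ℝ) (n : ℕ) : Polynomial ℝ :=
  jacobiP α (β + 1) n
    - Polynomial.C (2 * (α + (n : ℝ)) * ((n : ℝ) + α + β + 1) /
        ((2 * (n : ℝ) + α + β + 1) * (2 * (n : ℝ) + α + β)))
      * jacobiP α (β + 1) (n - 1)

lemma key (c1 c2 l1 l2 g1 g2 g3 cq lq : ℝ) (P0 P1 : Polynomial ℝ)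
    (h1 : c2 + g3 = cq + g2)
    (h2 : c1*c2 + g3*c1 + lq = l2 + c1*cq + g2*cq)
    (h3 : l1*g2 = lq*g1) :
    ((X - C c2) * ((X - C c1) * P1 - C l1 * P0) - C l2 * P1) - C g3 * ((X - C c1) * P1 - C l1 * P0)
    = (X - C cq) * (((X - C c1) * P1 - C l1 * P0) - C g2 * P1) - C lq * (P1 - C g1 * P0) := by
  have H1 : C c2 + C g3 = C cq + (C g2 : Polynomial ℝ) := by
    rw [← C_add, ← C_add, h1]
  have H2 : C c1 * C c2 + C g3 * C c1 + C lq = C l2 + C c1 * C cq + C g2 * (C cq : Polynomial ℝ) := by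
    simp only [← C_mul, ← C_add]; exact congrArg C h2
  have H3 : C l1 * C g2 = C lq * (C g1 : Polynomial ℝ) := by
    rw [← C_mul, ← C_mul, h3]
  linear_combination (-(X * P1) + C l1 * P0) * H1 + P1 * H2 + P0 * H3

set_option maxHeartbeats 2000000 in
/-- the quasi-Christoffel Jacobi polynomials satisfy a three-term
recurrence relation with the stated coefficients. -/
theorem quasiChristoffel_jacobi_ttrr
    (α β : ℝ) (hα : -1 < α) (hβ : -1 < β)
    (hab1 : α + β ≠ -1) (hab0 : α + β ≠ 0) :
    ∀ n : ℕ, 2 ≤ n →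
      JQC α β (n + 1) =
        (X - Polynomial.C ((β - α) * (2 + β + α) /
            ((2 * (n : ℝ) + α + β) * (2 * (n : ℝ) + α + β + 2)))) * JQC α β n
        - Polynomial.C (4 * ((n : ℝ) - 1) * ((n : ℝ) + α) * ((n : ℝ) + β) * ((n : ℝ) + α + β + 1) /
            ((2 * (n : ℝ) + α + β) ^ 2 * (2 * (n : ℝ) + α + β + 1) * (2 * (n : ℝ) + α + β - 1)))
          * JQC α β (n - 1) := by
  rintro n hn
  obtain ⟨m, rfl⟩ : ∃ m, n = m + 2 := ⟨n - 2, by omega⟩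
  simp only [JQC, Nat.add_sub_cancel]
  rw [show jacobiP α (β+1) (m+2+1) = (X - Polynomial.C (jacobiC α (β+1) (m+2))) * jacobiP α (β+1) (m+2)
      - Polynomial.C (jacobiL α (β+1) (m+2)) * jacobiP α (β+1) (m+1) from rfl,
     show jacobiP α (β+1) (m+2) = (X - Polynomial.C (jacobiC α (β+1) (m+1))) * jacobiP α (β+1) (m+1)
      - Polynomial.C (jacobiL α (β+1) (m+1)) * jacobiP α (β+1) m from rfl]
  have hm : (0:ℝ) ≤ (m:ℝ) := Nat.cast_nonneg m
  obtain ⟨s, hs, hm'⟩ : ∃ s:ℝ, s = 2*(m:ℝ)+α+β+4 ∧ (m:ℝ) = (s-4-α-β)/2 := ⟨_, rfl, by ring⟩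
  have j1 : s - 1 ≠ 0 := by rw [hs]; linarith [hm]
  have j2 : s + 1 ≠ 0 := by rw [hs]; linarith [hm]
  have j3 : s + 2 ≠ 0 := by rw [hs]; linarith [hm]
  have j4 : s + 3 ≠ 0 := by rw [hs]; linarith [hm]
  have j5 : s - 2 ≠ 0 := by rw [hs]; linarith [hm]
  have j6 : s ≠ 0 := by rw [hs]; linarith [hm]
  apply key <;>
  · simp only [jacobiC, jacobiL]
    push_cast
    rw [hm']
    simp only [show ((2 * ((s - 4 - α - β) / 2 + 2) + α + (β + 1)) * (2 * ((s - 4 - α - β) / 2 + 2) + α + (β + 1) + 2) : ℝ) = (s+1)*(s+3) from by ring,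
      show ((2 * ((s - 4 - α - β) / 2 + 2 + 1) + α + β + 1) * (2 * ((s - 4 - α - β) / 2 + 2 + 1) + α + β) : ℝ) = (s+3)*(s+2) from by ring,
      show ((2 * ((s - 4 - α - β) / 2 + 2) + α + β) * (2 * ((s - 4 - α - β) / 2 + 2) + α + β + 2) : ℝ) = s*(s+2) from by ring,
      show ((2 * ((s - 4 - α - β) / 2 + 2) + α + β + 1) * (2 * ((s - 4 - α - β) / 2 + 2) + α + β) : ℝ) = (s+1)*s from by ring,
      show ((2 * ((s - 4 - α - β) / 2 + 1) + α + (β + 1)) * (2 * ((s - 4 - α - β) / 2 + 1) + α + (β + 1) + 2) : ℝ) = (s-1)*(s+1) from by ring,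
      show ((2 * ((s - 4 - α - β) / 2 + 2) + α + (β + 1)) ^ 2 * (2 * ((s - 4 - α - β) / 2 + 2) + α + (β + 1) + 1) * (2 * ((s - 4 - α - β) / 2 + 2) + α + (β + 1) - 1) : ℝ) = (s+1)^2*(s+2)*s from by ring,
      show ((2 * ((s - 4 - α - β) / 2 + 2) + α + β) ^ 2 * (2 * ((s - 4 - α - β) / 2 + 2) + α + β + 1) * (2 * ((s - 4 - α - β) / 2 + 2) + α + β - 1) : ℝ) = s^2*(s+1)*(s-1) from by ring,
      show ((2 * ((s - 4 - α - β) / 2 + 1) + α + (β + 1)) ^ 2 * (2 * ((s - 4 - α - β) / 2 + 1) + α + (β + 1) + 1) * (2 * ((s - 4 - α - β) / 2 + 1) + α + (β + 1) - 1) : ℝ) = (s-1)^2*s*(s-2) from by ring,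
      show ((2 * ((s - 4 - α - β) / 2 + 1) + α + β + 1) * (2 * ((s - 4 - α - β) / 2 + 1) + α + β) : ℝ) = (s-1)*(s-2) from by ring]
    field_simp
    ring
end

section
/- Let α be a real number with α > −1 and define m_n = (n−1)/(2n+α+1) for n ≥ 1. Then m_1 = 0 and, for every n ≥ 2: (1 − m_{n−1})·m_n = (n−1)(n+α+1)/((2n+α+1)(2n+α−1)), and 0 < m_n < 1/2. -/
noncomputable def laguerreChainParam (α x : ℝ) : ℝ := (x - 1) / (2 * x + α + 1)

namespace laguerreChainParam

variable {α x : ℝ}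

theorem one_sub_sub_one (h : 2 * x + α - 1 ≠ 0) :
    1 - laguerreChainParam α (x - 1) = (x + α + 1) / (2 * x + α - 1) := by
  rw [laguerreChainParam, show 2 * (x - 1) + α + 1 = 2 * x + α - 1 by ring, one_sub_div h]
  congr 1
  ring

theorem chain_identity (h : 2 * x + α - 1 ≠ 0) :
    (1 - laguerreChainParam α (x - 1)) * laguerreChainParam α x =
      (x - 1) * (x + α + 1) / ((2 * x + α + 1) * (2 * x + α - 1)) := by
  rw [one_sub_sub_one h, laguerreChainParam, div_mul_div_comm, mul_comm (x + α + 1),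
    mul_comm (2 * x + α - 1)]

theorem pos (hx : 1 < x) (hden : 0 < 2 * x + α + 1) : 0 < laguerreChainParam α x :=
  div_pos (by linarith) hden

theorem lt_half (hα : -3 < α) (hden : 0 < 2 * x + α + 1) : laguerreChainParam α x < 1 / 2 := by
  rw [laguerreChainParam, div_lt_iff₀ hden]
  linarith

end laguerreChainParam

/-- `m_n = (n-1)/(2n+α+1)` is the minimal parameter sequence of the chain
sequence `s_n = (n-1)(n+α+1)/((2n+α+1)(2n+α-1))` coming from the quasi-Christoffel
Laguerre polynomials at `x = 0`, and `0 < m_n < 1/2` for `n ≥ 2`. -/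
theorem quasiChristoffel_laguerre_chain_sequence
    (α : ℝ) (hα : -1 < α) (m : ℕ → ℝ)
    (hm : ∀ n : ℕ, 1 ≤ n → m n = ((n : ℝ) - 1) / (2 * (n : ℝ) + α + 1)) :
    m 1 = 0 ∧
    ∀ n : ℕ, 2 ≤ n →
      (1 - m (n - 1)) * m n =
        ((n : ℝ) - 1) * ((n : ℝ) + α + 1) /
          ((2 * (n : ℝ) + α + 1) * (2 * (n : ℝ) + α - 1)) ∧
      0 < m n ∧ m n < 1 / 2 := by
  refine ⟨by simp [hm 1 le_rfl], fun n hn => ?_⟩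
  have hn' : (2 : ℝ) ≤ n := by exact_mod_cast hn
  have hden : 0 < 2 * (n : ℝ) + α + 1 := by linarith
  have hmn : m n = laguerreChainParam α n := hm n (by omega)
  have hmn₁ : m (n - 1) = laguerreChainParam α (n - 1) := by
    rw [hm (n - 1) (by omega), Nat.cast_sub (by omega : 1 ≤ n), Nat.cast_one, laguerreChainParam]
  rw [hmn, hmn₁]
  exact ⟨laguerreChainParam.chain_identity (by linarith),
    laguerreChainParam.pos (by linarith) hden, laguerreChainParam.lt_half (by linarith) hden⟩
end

section
/- Let α, β be reals with α > −1, β > −1, and α + β ∉ {−1, 0, 1, 2}. Then for every n ≥ 1, in ℝ[X]: (x − 1)·P_{n−1}^{(α+1,β−1)}(x) = P_n^{(α,β−1)}(x) − [2(α+n)(n+α+β−1)/((2n+α+β−1)(2n+α+β−2))]·P_{n−1}^{(α,β−1)}(x). -/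
open Polynomial

/-!
Writing `Qₘ = P^{(a+1,b)}_m` and `Pₘ = P^{(a,b)}_m`, the identity `(X - 1) Qₘ = Pₘ₊₁ - χₘ₊₁ Pₘ` is
a Christoffel transform (evaluating at `1` forces `χₘ₊₁ = Pₘ₊₁(1) / Pₘ(1)`). Multiplying the
recurrence of `Q` by `X - 1` and inserting the identity for `m` and `m + 1` expresses
`(X - 1) Qₘ₊₂` through `Pₘ₊₂, Pₘ₊₁, Pₘ`; matching coefficients with `Pₘ₊₃ - χₘ₊₃ Pₘ₊₂` leaves
three scalar identities between the recurrence coefficients, which for Jacobi parameters are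
rational identities in `n, a, b`.
-/

section ThreeTerm

variable {R : Type*} [CommRing R]

noncomputable def threeTermPoly (c l : ℕ → R) : ℕ → R[X]
  | 0 => 1
  | 1 => X - C (c 0)
  | n + 2 => (X - C (c (n + 1))) * threeTermPoly c l (n + 1) - C (l (n + 1)) * threeTermPoly c l n

theorem jacobiP_eq_threeTermPoly (a b : ℝ) :
    jacobiP a b = threeTermPoly (jacobiC a b) (jacobiL a b) := by
  funext n
  induction n using Nat.twoStepInduction with
  | zero => rfl
  | one => rfl
  | more n ih₀ ih₁ => simp only [jacobiP, threeTermPoly, ih₀, ih₁]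

theorem X_sub_C_mul_threeTermPoly {c l c' l' χ : ℕ → R} {t : R}
    (h₀ : t = c 0 + χ 1) (hl₀ : l' 0 = 0)
    (hc : ∀ n, c' n + χ (n + 1) = c (n + 1) + χ (n + 2))
    (hl : ∀ n, l (n + 1) + χ (n + 1) * c' n = l' n + χ (n + 1) * c n)
    (hχ : ∀ n, l' (n + 1) * χ (n + 1) = χ (n + 2) * l (n + 1)) (m : ℕ) :
    (X - C t) * threeTermPoly c' l' m =
      threeTermPoly c l (m + 1) - C (χ (m + 1)) * threeTermPoly c l m := by
  induction m using Nat.twoStepInduction with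
  | zero => simp only [threeTermPoly, h₀, map_add]; ring
  | one =>
    have hc₀ := congrArg C (hc 0)
    have hl₁ := congrArg C (hl 0)
    simp only [map_add, map_mul, hl₀, map_zero] at hc₀ hl₁
    simp only [threeTermPoly, h₀, map_add]
    linear_combination (C (c 0) - X) * hc₀ + hl₁
  | more k ih₀ ih₁ =>
    have hcₖ := congrArg C (hc (k + 1))
    have hlₖ := congrArg C (hl (k + 1))
    have hχₖ := congrArg C (hχ k)
    simp only [map_add, map_mul] at hcₖ hlₖ hχₖ
    rw [threeTermPoly.eq_3 c' l' k, threeTermPoly.eq_3 c l (k + 1)]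
    linear_combination (X - C (c' (k + 1))) * ih₁ - C (l' (k + 1)) * ih₀
      - threeTermPoly c l (k + 2) * hcₖ + C (χ (k + 2)) * threeTermPoly.eq_3 c l k
      + threeTermPoly c l (k + 1) * hlₖ + threeTermPoly c l k * hχₖ

end ThreeTerm

noncomputable def jacobiChi (a b : ℝ) (n : ℕ) : ℝ :=
  2 * (n + a) * (n + a + b) / ((2 * n + a + b) * (2 * n + a + b - 1))

section JacobiCoefficients

variable {a b d : ℝ} {n : ℕ}

theorem jacobiL_zero : jacobiL a b 0 = 0 := by
  simp [jacobiL]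

theorem jacobiC_eq_div (h : 2 * (n : ℝ) + a + b = d) :
    jacobiC a b n = (b ^ 2 - a ^ 2) / (d * (d + 2)) := by
  rw [jacobiC, h]

theorem jacobiL_eq_div (h : 2 * (n : ℝ) + a + b = d) :
    jacobiL a b n = 4 * n * (n + a) * (n + b) * (n + a + b) / (d ^ 2 * (d + 1) * (d - 1)) := by
  rw [jacobiL, h]

theorem jacobiChi_eq_div (h : 2 * (n : ℝ) + a + b = d) :
    jacobiChi a b n = 2 * (n + a) * (n + a + b) / (d * (d - 1)) := by
  rw [jacobiChi, h]

variable (hab : ∀ j : ℕ, (j : ℝ) + a + b ≠ 0)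
include hab

theorem add_ne_zero_of_two_mul_add_eq (n : ℕ) (hd : 2 * (n : ℝ) + a + b = d) :
    d ≠ 0 ∧ d + 1 ≠ 0 ∧ d + 2 ≠ 0 ∧ d + 3 ≠ 0 ∧ d + 4 ≠ 0 := by
  have h (k : ℕ) : d + k ≠ 0 := by
    have := hab (2 * n + k)
    push_cast at this
    contrapose! this
    linarith
  exact ⟨by simpa using h 0, by simpa using h 1, by simpa using h 2, by simpa using h 3,
    by simpa using h 4⟩

/- In each identity below, `d = 2n + a + b` and every denominator is one of `d, …, d + 4`. -/

theorem jacobiC_zero_add_jacobiChi_one : jacobiC a b 0 + jacobiChi a b 1 = 1 := by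
  obtain ⟨d, hd⟩ : ∃ d, 2 * ((0 : ℕ) : ℝ) + a + b = d := ⟨_, rfl⟩
  obtain ⟨h₀, h₁, h₂, -⟩ := add_ne_zero_of_two_mul_add_eq hab 0 hd
  rw [jacobiC_eq_div hd, jacobiChi_eq_div (d := d + 2) (by push_cast at hd ⊢; linarith)]
  norm_num [add_assoc, add_sub_assoc]
  field_simp
  subst hd
  push_cast
  ring

theorem jacobiC_add_jacobiChi_succ :
    jacobiC (a + 1) b n + jacobiChi a b (n + 1) = jacobiC a b (n + 1) + jacobiChi a b (n + 2) := by
  obtain ⟨d, hd⟩ : ∃ d, 2 * (n : ℝ) + a + b = d := ⟨_, rfl⟩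
  obtain ⟨h₀, h₁, h₂, h₃, h₄⟩ := add_ne_zero_of_two_mul_add_eq hab n hd
  rw [jacobiC_eq_div (d := d + 1) (by linarith),
    jacobiChi_eq_div (d := d + 2) (by push_cast; linarith),
    jacobiC_eq_div (d := d + 2) (by push_cast; linarith),
    jacobiChi_eq_div (d := d + 4) (by push_cast; linarith)]
  push_cast
  norm_num [add_assoc, add_sub_assoc]
  field_simp
  subst hd
  ring

theorem jacobiL_add_jacobiChi_mul_jacobiC :
    jacobiL a b (n + 1) + jacobiChi a b (n + 1) * jacobiC (a + 1) b n =
      jacobiL (a + 1) b n + jacobiChi a b (n + 1) * jacobiC a b n := by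
  obtain ⟨d, hd⟩ : ∃ d, 2 * (n : ℝ) + a + b = d := ⟨_, rfl⟩
  obtain ⟨h₀, h₁, h₂, h₃, -⟩ := add_ne_zero_of_two_mul_add_eq hab n hd
  rw [jacobiL_eq_div (d := d + 2) (by push_cast; linarith),
    jacobiChi_eq_div (d := d + 2) (by push_cast; linarith),
    jacobiC_eq_div (d := d + 1) (by linarith), jacobiL_eq_div (d := d + 1) (by linarith),
    jacobiC_eq_div hd]
  push_cast
  norm_num [add_assoc, add_sub_assoc]
  field_simp
  subst hd
  ring

theorem jacobiL_mul_jacobiChi :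
    jacobiL (a + 1) b (n + 1) * jacobiChi a b (n + 1) =
      jacobiChi a b (n + 2) * jacobiL a b (n + 1) := by
  obtain ⟨d, hd⟩ : ∃ d, 2 * (n : ℝ) + a + b = d := ⟨_, rfl⟩
  obtain ⟨-, h₁, h₂, h₃, h₄⟩ := add_ne_zero_of_two_mul_add_eq hab n hd
  rw [jacobiL_eq_div (d := d + 3) (by push_cast; linarith),
    jacobiChi_eq_div (d := d + 2) (by push_cast; linarith),
    jacobiChi_eq_div (d := d + 4) (by push_cast; linarith),
    jacobiL_eq_div (d := d + 2) (by push_cast; linarith)]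
  push_cast
  norm_num [add_assoc, add_sub_assoc]
  field_simp
  subst hd
  ring

theorem X_sub_one_mul_jacobiP (m : ℕ) :
    (X - 1) * jacobiP (a + 1) b m =
      jacobiP a b (m + 1) - C (jacobiChi a b (m + 1)) * jacobiP a b m := by
  simpa only [jacobiP_eq_threeTermPoly, map_one] using
    X_sub_C_mul_threeTermPoly (jacobiC_zero_add_jacobiChi_one hab).symm jacobiL_zero
      (fun _ => jacobiC_add_jacobiChi_succ hab) (fun _ => jacobiL_add_jacobiChi_mul_jacobiC hab)
      (fun _ => jacobiL_mul_jacobiChi hab) m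

end JacobiCoefficients

theorem quasiGeronimus_jacobi_compact_sol1_general
    (α β : ℝ) (hα : -1 < α) (hβ : -1 < β)
    (hab1 : α + β ≠ -1) (hab0 : α + β ≠ 0) (hab2 : α + β ≠ 1) :
    ∀ n : ℕ, 1 ≤ n →
      (X - 1) * jacobiP (α + 1) (β - 1) (n - 1) =
        jacobiP α (β - 1) n
        - Polynomial.C (2 * (α + (n : ℝ)) * ((n : ℝ) + α + β - 1) /
            ((2 * (n : ℝ) + α + β - 1) * (2 * (n : ℝ) + α + β - 2)))
          * jacobiP α (β - 1) (n - 1) := by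
  have hab (j : ℕ) : (j : ℝ) + α + (β - 1) ≠ 0 := by
    rcases j with _ | _ | _ | j
    · intro h; exact hab2 (by push_cast at h; linarith)
    · intro h; exact hab0 (by push_cast at h; linarith)
    · intro h; exact hab1 (by push_cast at h; linarith)
    · push_cast; linarith
  intro n hn
  obtain ⟨m, rfl⟩ := Nat.exists_eq_add_of_le' hn
  rw [Nat.add_sub_cancel]
  convert X_sub_one_mul_jacobiP hab m using 4
  rw [jacobiChi]
  ring

/-- compact form of the quasi-Geronimus Jacobi polynomial (Solution 1):
`(x-1) P_{n-1}^{(α+1,β-1)} = P_n^{(α,β-1)} - χ_n P_{n-1}^{(α,β-1)}`. -/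
theorem quasiGeronimus_jacobi_compact_sol1
    (α β : ℝ) (hα : -1 < α) (hβ : -1 < β)
    (hab1 : α + β ≠ -1) (hab0 : α + β ≠ 0) (hab2 : α + β ≠ 1) (hab3 : α + β ≠ 2) :
    ∀ n : ℕ, 1 ≤ n →
      (X - 1) * jacobiP (α + 1) (β - 1) (n - 1) =
        jacobiP α (β - 1) n
        - Polynomial.C (2 * (α + (n : ℝ)) * ((n : ℝ) + α + β - 1) /
            ((2 * (n : ℝ) + α + β - 1) * (2 * (n : ℝ) + α + β - 2)))
          * jacobiP α (β - 1) (n - 1) :=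
  quasiGeronimus_jacobi_compact_sol1_general α β hα hβ hab1 hab0 hab2
end
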